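/- Let Σ be a finite alphabet and X ⊆ Σ^ℕ a nonempty subshift with language L, and let S_X = L ∪ {0} be the associated semigroup with zero. Call a word ω admissible if ω is a finite word belonging to L or an infinite word belonging to X, and for an admissible ω let δ_ω be the set of all prefixes of ω of positive length (each such prefix lies in L). Then: (i) δ_ω is a string in S_X; (ii) δ_ω is an open string if and only if ω is infinite; (iii) δ_ω is a maximal string if and only if ω is infinite; (iv) for every string σ in S_X there is a unique admissible word ω with σ = δ_ω. -/

import Mathlib

/-!
In the language semigroup of a subshift, `s ∥ t` says exactly that the word `s` is a prefix of
the word `t`, because the language is closed under taking nonempty factors. Hence a string is a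
nonempty chain of words for the prefix order, closed under nonempty prefixes. If the chain has a
longest word `w`, it is `δ_w`; otherwise its words are the prefixes of one infinite word `x`,
and `x ∈ X` because every prefix of `x` occurs in `X`, `X` is shift-invariant and closed.
A finite `w` is neither open nor maximal: `w ∈ δ_w` has no extension inside `δ_w`, while
`δ_w ⊊ δ_{wa}` for any letter `a` with `wa ∈ L`.
-/

namespace ExSt

/-- The language semigroup `S = L ∪ {0}`, with `none` playing the role of `0`. -/
abbrev LangSG (A : Type*) (L : Set (List A)) : Type _ := Option {w : List A // w ∈ L}

open Classical in
/-- Multiplication on `S = L ∪ {0}`: concatenation if the result lies in `L`, `0`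
otherwise. -/
noncomputable def langMul {A : Type*} (L : Set (List A)) :
    LangSG A L → LangSG A L → LangSG A L
  | some a, some b => if h : a.1 ++ b.1 ∈ L then some ⟨a.1 ++ b.1, h⟩ else none
  | _, _ => none

/-- Divisibility in the language semigroup. -/
def langDivides {A : Type*} (L : Set (List A)) (s t : LangSG A L) : Prop :=
  t = s ∨ ∃ u : LangSG A L, t = langMul L s u

/-- A string in the language semigroup. -/
def langIsString {A : Type*} (L : Set (List A)) (σ : Set (LangSG A L)) : Prop :=
  σ.Nonempty ∧ none ∉ σ ∧ (∀ s t : LangSG A L, langDivides L s t → t ∈ σ → s ∈ σ) ∧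
    ∀ s₁ ∈ σ, ∀ s₂ ∈ σ, ∃ s ∈ σ, langDivides L s₁ s ∧ langDivides L s₂ s

/-- The interior of a string in the language semigroup. -/
def langInterior {A : Type*} (L : Set (List A)) (σ : Set (LangSG A L)) :
    Set (LangSG A L) :=
  {s | ∃ x : LangSG A L, langMul L s x ∈ σ}

/-- The language of a subshift `X ⊆ Σ^ℕ`: finite words of positive length occurring as a
block of some element of `X`. -/
def shiftLang {A : Type*} (X : Set (ℕ → A)) : Set (List A) :=
  {w | w ≠ [] ∧ ∃ x ∈ X, ∃ n : ℕ, ∀ (i : ℕ) (h : i < w.length), w.get ⟨i, h⟩ = x (n + i)}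

/-- A word (finite or infinite) is admissible if it belongs to the language (finite case) or
to the subshift (infinite case). -/
def Admissible {A : Type*} (X : Set (ℕ → A)) : List A ⊕ (ℕ → A) → Prop
  | Sum.inl w => w ∈ shiftLang X
  | Sum.inr x => x ∈ X

/-- The set `δ_ω` of prefixes of positive length of an admissible word `ω`, viewed inside
the language semigroup `S_X`. -/
def deltaSet {A : Type*} (X : Set (ℕ → A)) :
    List A ⊕ (ℕ → A) → Set (LangSG A (shiftLang X))
  | Sum.inl w => {a | ∃ p : {w' : List A // w' ∈ shiftLang X},
      a = some p ∧ p.1 ≠ [] ∧ p.1 <+: w}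
  | Sum.inr x => {a | ∃ p : {w' : List A // w' ∈ shiftLang X},
      a = some p ∧ p.1 ≠ [] ∧ ∀ (i : ℕ) (h : i < p.1.length), p.1.get ⟨i, h⟩ = x i}

section InfiniteWords
variable {A : Type*}

def seqTake (x : ℕ → A) (n : ℕ) : List A := (List.range n).map x

@[simp]
lemma length_seqTake (x : ℕ → A) (n : ℕ) : (seqTake x n).length = n := by
  simp [seqTake]

@[simp]
lemma getElem_seqTake (x : ℕ → A) {n i : ℕ} (h : i < (seqTake x n).length) :
    (seqTake x n)[i] = x i := by
  simp [seqTake]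

lemma seqTake_succ (x : ℕ → A) (n : ℕ) : seqTake x (n + 1) = seqTake x n ++ [x n] := by
  simp [seqTake, List.range_succ]

lemma take_seqTake (x : ℕ → A) {m n : ℕ} (h : m ≤ n) :
    (seqTake x n).take m = seqTake x m := by
  rw [seqTake, ← List.map_take, List.take_range, min_eq_left h, seqTake]

lemma seqTake_prefix_seqTake (x : ℕ → A) {m n : ℕ} (h : m ≤ n) : seqTake x m <+: seqTake x n :=
  take_seqTake x h ▸ List.take_prefix m _

lemma eq_seqTake_of_prefix {x : ℕ → A} {p : List A} {n : ℕ} (h : p <+: seqTake x n) :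
    p = seqTake x p.length := by
  have hn : p.length ≤ n := length_seqTake x n ▸ h.length_le
  rw [← take_seqTake x hn]
  exact List.prefix_iff_eq_take.1 h

lemma eq_seqTake_iff {x : ℕ → A} {p : List A} :
    p = seqTake x p.length ↔ ∀ (i : ℕ) (h : i < p.length), p.get ⟨i, h⟩ = x i := by
  refine ⟨fun hp i h => ?_, fun hp => List.ext_getElem (length_seqTake _ _).symm ?_⟩
  · simp only [List.get_eq_getElem]
    rw [List.getElem_of_eq hp, getElem_seqTake]
  · intro i h _
    rw [getElem_seqTake]
    exact hp i h

end InfiniteWords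

section Language
variable {A : Type*} {X : Set (ℕ → A)}

lemma mem_shiftLang_of_infix {v w : List A} (hw : w ∈ shiftLang X) (hv : v ≠ []) (h : v <:+: w) :
    v ∈ shiftLang X := by
  obtain ⟨-, x, hx, n, hwx⟩ := hw
  obtain ⟨k, hk, hvw⟩ := List.infix_iff_getElem?.1 h
  refine ⟨hv, x, hx, n + k, fun i hi => ?_⟩
  have hik : i + k < w.length := by omega
  have hvi := hvw i hi
  rw [List.getElem?_eq_getElem hik, Option.some_inj] at hvi
  rw [List.get_eq_getElem, ← hvi, Nat.add_assoc, Nat.add_comm k]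
  exact hwx _ hik

lemma seqTake_mem_shiftLang {x : ℕ → A} (hx : x ∈ X) {n : ℕ} (hn : n ≠ 0) :
    seqTake x n ∈ shiftLang X :=
  ⟨by simpa [← List.length_eq_zero_iff] using hn, x, hx, 0, fun i _ => by simp⟩

lemma exists_append_singleton_mem_shiftLang {w : List A} (hw : w ∈ shiftLang X) :
    ∃ a, w ++ [a] ∈ shiftLang X := by
  obtain ⟨-, x, hx, n, hwx⟩ := hw
  refine ⟨x (n + w.length), by simp, x, hx, n, fun i hi => ?_⟩
  simp only [List.length_append, List.length_singleton] at hi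
  simp only [List.get_eq_getElem, List.getElem_append, List.getElem_singleton]
  split_ifs with h
  · exact hwx i h
  · rw [show i = w.length by omega]

lemma shift_iterate_mem (hXsh : ∀ x ∈ X, (fun n => x (n + 1)) ∈ X) {x : ℕ → A} (hx : x ∈ X)
    (k : ℕ) : (fun n => x (k + n)) ∈ X := by
  induction k with
  | zero => simpa using hx
  | succ k ih => simpa only [Nat.add_right_comm k 1, Nat.add_assoc] using hXsh _ ih

lemma exists_eq_seqTake_of_mem_shiftLang (hXsh : ∀ x ∈ X, (fun n => x (n + 1)) ∈ X)
    {w : List A} (hw : w ∈ shiftLang X) : ∃ y ∈ X, w = seqTake y w.length := by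
  obtain ⟨-, x, hx, n, hwx⟩ := hw
  exact ⟨_, shift_iterate_mem hXsh hx n, eq_seqTake_iff.2 hwx⟩

lemma mem_of_forall_seqTake_mem_shiftLang
    (hXcl : @IsClosed (ℕ → A) (@Pi.topologicalSpace ℕ (fun _ => A) (fun _ => ⊥)) X)
    (hXsh : ∀ x ∈ X, (fun n => x (n + 1)) ∈ X) {x : ℕ → A}
    (h : ∀ n, seqTake x (n + 1) ∈ shiftLang X) : x ∈ X := by
  let _ : TopologicalSpace A := ⊥
  have _ : DiscreteTopology A := ⟨rfl⟩
  have hXcl : IsClosed X := hXcl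
  choose y hyX hyx using fun n => exists_eq_seqTake_of_mem_shiftLang hXsh (h n)
  refine hXcl.mem_of_tendsto (b := Filter.atTop) (tendsto_pi_nhds.2 fun i => ?_)
    (Filter.Eventually.of_forall hyX)
  rw [nhds_discrete, Filter.tendsto_pure]
  refine Filter.eventually_atTop.2 ⟨i, fun n hn => ?_⟩
  have hi : i < n + 1 := by omega
  have hyxi := congrArg (·[i]?) (hyx n)
  simpa [List.getElem?_eq_getElem, hi] using hyxi.symm

end Language

section Semigroup
variable {A : Type*} {L : Set (List A)}

lemma langMul_some_some {a c : {w // w ∈ L}} (h : a.1 ++ c.1 ∈ L) :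
    langMul L (some a) (some c) = some ⟨a.1 ++ c.1, h⟩ :=
  dif_pos h

lemma exists_of_langMul_eq_some {s u : LangSG A L} {b : {w // w ∈ L}}
    (h : langMul L s u = some b) : ∃ a c, s = some a ∧ u = some c ∧ b.1 = a.1 ++ c.1 := by
  match s, u, h with
  | some a, some c, h =>
    simp only [langMul] at h
    split_ifs at h with hac
    exact ⟨a, c, rfl, rfl, by rw [← Option.some_inj.1 h]⟩

lemma exists_prefix_of_langDivides {s : LangSG A L} {b : {w // w ∈ L}}
    (h : langDivides L s (some b)) : ∃ a, s = some a ∧ a.1 <+: b.1 := by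
  rcases h with h | ⟨u, h⟩
  · exact ⟨b, h.symm, List.prefix_refl _⟩
  · obtain ⟨a, c, rfl, -, hb⟩ := exists_of_langMul_eq_some h.symm
    exact ⟨a, rfl, c.1, hb.symm⟩

lemma langIsString.exists_eq_some {σ : Set (LangSG A L)} (hσ : langIsString L σ)
    {s : LangSG A L} (hs : s ∈ σ) : ∃ a, s = some a := by
  cases s with
  | none => exact absurd hs hσ.2.1
  | some a => exact ⟨a, rfl⟩

lemma langIsString.prefix_total {σ : Set (LangSG A L)} (hσ : langIsString L σ)
    {a b : {w // w ∈ L}} (ha : some a ∈ σ) (hb : some b ∈ σ) : a.1 <+: b.1 ∨ b.1 <+: a.1 := by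
  obtain ⟨s, hs, has, hbs⟩ := hσ.2.2.2 _ ha _ hb
  obtain ⟨c, rfl⟩ := hσ.exists_eq_some hs
  obtain ⟨a', ha', hac⟩ := exists_prefix_of_langDivides has
  obtain ⟨b', hb', hbc⟩ := exists_prefix_of_langDivides hbs
  cases Option.some_inj.1 ha'
  cases Option.some_inj.1 hb'
  exact List.prefix_or_prefix_of_prefix hac hbc

lemma langIsString.langInterior_subset {σ : Set (LangSG A L)} (hσ : langIsString L σ) :
    langInterior L σ ⊆ σ :=
  fun s ⟨u, hu⟩ => hσ.2.2.1 s _ (Or.inr ⟨u, rfl⟩) hu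

end Semigroup

section SubshiftSemigroup
variable {A : Type*} {X : Set (ℕ → A)}

lemma langDivides_some_of_prefix {a b : {w // w ∈ shiftLang X}} (h : a.1 <+: b.1) :
    langDivides (shiftLang X) (some a) (some b) := by
  obtain ⟨c, hc⟩ := h
  rcases eq_or_ne c [] with rfl | hc₀
  · exact Or.inl (congrArg some (Subtype.ext (by simpa using hc.symm)))
  · have hcL : c ∈ shiftLang X :=
      mem_shiftLang_of_infix b.2 hc₀ (hc ▸ (List.suffix_append _ _).isInfix)
    refine Or.inr ⟨some ⟨c, hcL⟩, ?_⟩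
    rw [langMul_some_some (hc ▸ b.2)]
    exact congrArg some (Subtype.ext hc.symm)

lemma langIsString.mem_of_prefix {σ : Set (LangSG A (shiftLang X))}
    (hσ : langIsString (shiftLang X) σ) {a b : {w // w ∈ shiftLang X}} (hb : some b ∈ σ)
    (h : a.1 <+: b.1) : some a ∈ σ :=
  hσ.2.2.1 _ _ (langDivides_some_of_prefix h) hb

lemma langIsString_of_prefix_chain {σ : Set (LangSG A (shiftLang X))} (hne : σ.Nonempty)
    (hnone : none ∉ σ)
    (hprefix : ∀ a b : {w // w ∈ shiftLang X}, a.1 <+: b.1 → some b ∈ σ → some a ∈ σ)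
    (htotal : ∀ a b : {w // w ∈ shiftLang X}, some a ∈ σ → some b ∈ σ →
      a.1 <+: b.1 ∨ b.1 <+: a.1) :
    langIsString (shiftLang X) σ := by
  refine ⟨hne, hnone, fun s t hst ht => ?_, fun s₁ h₁ s₂ h₂ => ?_⟩
  · cases t with
    | none => exact absurd ht hnone
    | some b =>
      obtain ⟨a, rfl, hab⟩ := exists_prefix_of_langDivides hst
      exact hprefix a b hab ht
  · cases s₁ with
    | none => exact absurd h₁ hnone
    | some a =>
    cases s₂ with
    | none => exact absurd h₂ hnone
    | some b =>
    rcases htotal a b h₁ h₂ with hab | hba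
    · exact ⟨some b, h₂, langDivides_some_of_prefix hab, Or.inl rfl⟩
    · exact ⟨some a, h₁, Or.inl rfl, langDivides_some_of_prefix hba⟩

end SubshiftSemigroup

section Delta
variable {A : Type*} {X : Set (ℕ → A)}

lemma mem_deltaSet_inl {w : List A} {p : {w // w ∈ shiftLang X}} :
    some p ∈ deltaSet X (Sum.inl w) ↔ p.1 <+: w := by
  refine ⟨?_, fun h => ⟨p, rfl, p.2.1, h⟩⟩
  rintro ⟨q, hq, -, hqw⟩
  rwa [Option.some_inj.1 hq]

lemma mem_deltaSet_inr {x : ℕ → A} {p : {w // w ∈ shiftLang X}} :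
    some p ∈ deltaSet X (Sum.inr x) ↔ p.1 = seqTake x p.1.length := by
  rw [eq_seqTake_iff]
  refine ⟨?_, fun h => ⟨p, rfl, p.2.1, h⟩⟩
  rintro ⟨q, hq, -, hqx⟩
  rwa [Option.some_inj.1 hq]

lemma none_notMem_deltaSet (ω : List A ⊕ (ℕ → A)) : none ∉ deltaSet X ω := by
  cases ω <;> rintro ⟨q, hq, -⟩ <;> exact Option.some_ne_none _ hq.symm

lemma seqTake_mem_deltaSet {x : ℕ → A} (hx : x ∈ X) {n : ℕ} (hn : n ≠ 0) :
    some ⟨seqTake x n, seqTake_mem_shiftLang hx hn⟩ ∈ deltaSet X (Sum.inr x) :=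
  mem_deltaSet_inr.2 (by rw [length_seqTake])

lemma deltaSet_isString {ω : List A ⊕ (ℕ → A)} (hω : Admissible X ω) :
    langIsString (shiftLang X) (deltaSet X ω) := by
  cases ω with
  | inl w =>
    refine langIsString_of_prefix_chain ⟨some ⟨w, hω⟩, mem_deltaSet_inl.2 (List.prefix_refl w)⟩
      (none_notMem_deltaSet _) (fun a b hab hb => ?_) fun a b ha hb => ?_
    · exact mem_deltaSet_inl.2 (hab.trans (mem_deltaSet_inl.1 hb))
    · exact List.prefix_or_prefix_of_prefix (mem_deltaSet_inl.1 ha) (mem_deltaSet_inl.1 hb)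
  | inr x =>
    refine langIsString_of_prefix_chain ⟨_, seqTake_mem_deltaSet hω one_ne_zero⟩
      (none_notMem_deltaSet _) (fun a b hab hb => ?_) fun a b ha hb => ?_
    · rw [mem_deltaSet_inr] at hb ⊢
      exact eq_seqTake_of_prefix (hb ▸ hab)
    · rw [mem_deltaSet_inr.1 ha, mem_deltaSet_inr.1 hb]
      rcases le_total a.1.length b.1.length with h | h
      · exact Or.inl (seqTake_prefix_seqTake x h)
      · exact Or.inr (seqTake_prefix_seqTake x h)

lemma deltaSet_eq_langInterior_iff {ω : List A ⊕ (ℕ → A)} (hω : Admissible X ω) :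
    deltaSet X ω = langInterior (shiftLang X) (deltaSet X ω) ↔ ∃ x, ω = Sum.inr x := by
  cases ω with
  | inl w =>
    refine iff_of_false (fun hopen => ?_) (by rintro ⟨_, ⟨⟩⟩)
    obtain ⟨u, hu⟩ : some ⟨w, hω⟩ ∈ langInterior (shiftLang X) (deltaSet X (Sum.inl w)) :=
      hopen ▸ mem_deltaSet_inl.2 (List.prefix_refl w)
    obtain ⟨b, hb⟩ := (deltaSet_isString hω).exists_eq_some hu
    obtain ⟨a, c, ha, rfl, hbac⟩ := exists_of_langMul_eq_some hb
    cases Option.some_inj.1 ha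
    have hbw := (mem_deltaSet_inl.1 (hb ▸ hu)).length_le
    simp only [hbac, List.length_append] at hbw
    exact c.2.1 (List.length_eq_zero_iff.1 (by omega))
  | inr x =>
    refine iff_of_true ?_ ⟨x, rfl⟩
    refine ((deltaSet_isString hω).langInterior_subset.antisymm fun s hs => ?_).symm
    obtain ⟨p, rfl⟩ := (deltaSet_isString hω).exists_eq_some hs
    have hp := mem_deltaSet_inr.1 hs
    have hsucc : p.1 ++ [x p.1.length] = seqTake x (p.1.length + 1) := by
      rw [seqTake_succ, ← hp]
    have hsuccL : p.1 ++ [x p.1.length] ∈ shiftLang X :=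
      hsucc ▸ seqTake_mem_shiftLang hω (Nat.succ_ne_zero _)
    refine ⟨some ⟨[x p.1.length], mem_shiftLang_of_infix hsuccL (List.cons_ne_nil _ _)
      (List.suffix_append _ _).isInfix⟩, ?_⟩
    rw [langMul_some_some hsuccL, mem_deltaSet_inr]
    change p.1 ++ [x p.1.length] = seqTake x (p.1 ++ [x p.1.length]).length
    rw [hsucc, length_seqTake]

end Delta

section Classification
variable {A : Type*} {X : Set (ℕ → A)}

lemma deltaSet_maximal_iff {ω : List A ⊕ (ℕ → A)} (hω : Admissible X ω) :
    (∀ μ : Set (LangSG A (shiftLang X)), langIsString (shiftLang X) μ →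
        deltaSet X ω ⊆ μ → deltaSet X ω = μ) ↔ ∃ x, ω = Sum.inr x := by
  cases ω with
  | inl w =>
    refine iff_of_false (fun hmax => ?_) (by rintro ⟨_, ⟨⟩⟩)
    obtain ⟨a, hwa⟩ := exists_append_singleton_mem_shiftLang (X := X) hω
    have hsub : deltaSet X (Sum.inl w) ⊆ deltaSet X (Sum.inl (w ++ [a])) := fun s hs => by
      obtain ⟨p, rfl⟩ := (deltaSet_isString hω).exists_eq_some hs
      exact mem_deltaSet_inl.2 ((mem_deltaSet_inl.1 hs).trans (List.prefix_append w [a]))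
    have hwa_mem : some ⟨w ++ [a], hwa⟩ ∈ deltaSet X (Sum.inl w) :=
      (hmax _ (deltaSet_isString (X := X) (ω := Sum.inl (w ++ [a])) hwa) hsub).symm ▸
        mem_deltaSet_inl.2 (List.prefix_refl _)
    simpa using (mem_deltaSet_inl.1 hwa_mem).length_le
  | inr x =>
    refine iff_of_true (fun μ hμ hsub => hsub.antisymm fun t ht => ?_) ⟨x, rfl⟩
    obtain ⟨q, rfl⟩ := hμ.exists_eq_some ht
    have hxq := hsub (seqTake_mem_deltaSet hω (List.length_pos_iff.2 q.2.1).ne')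
    refine mem_deltaSet_inr.2 ?_
    rcases hμ.prefix_total ht hxq with h | h
    · exact h.eq_of_length (length_seqTake _ _).symm
    · exact (h.eq_of_length (length_seqTake _ _)).symm

lemma deltaSet_injOn : Set.InjOn (deltaSet X) {ω | Admissible X ω} := by
  have not_inl_inr {w : List A} {x : ℕ → A} (hx : x ∈ X)
      (h : deltaSet X (Sum.inl w) = deltaSet X (Sum.inr x)) : False := by
    have hlong := seqTake_mem_deltaSet hx (Nat.succ_ne_zero w.length)
    rw [← h] at hlong
    simpa using (mem_deltaSet_inl.1 hlong).length_le
  rintro (w | x) hω (w' | x') hω' h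
  · have hww' := mem_deltaSet_inl.1 (h ▸ mem_deltaSet_inl.2 (List.prefix_refl w) :
      some ⟨w, hω⟩ ∈ deltaSet X (Sum.inl w'))
    have hw'w := mem_deltaSet_inl.1 (h ▸ mem_deltaSet_inl.2 (List.prefix_refl w') :
      some ⟨w', hω'⟩ ∈ deltaSet X (Sum.inl w))
    exact congrArg Sum.inl (hww'.eq_of_length_le hw'w.length_le)
  · exact (not_inl_inr hω' h).elim
  · exact (not_inl_inr hω h.symm).elim
  · refine congrArg Sum.inr (funext fun i => ?_)
    have hi := mem_deltaSet_inr.1 (h ▸ seqTake_mem_deltaSet hω (Nat.succ_ne_zero i))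
    simpa using congrArg (·[i]?) hi

lemma langIsString.eq_deltaSet_inl {σ : Set (LangSG A (shiftLang X))}
    (hσ : langIsString (shiftLang X) σ) {w : {w // w ∈ shiftLang X}} (hw : some w ∈ σ)
    (hlongest : ∀ v, some v ∈ σ → v.1.length ≤ w.1.length) : σ = deltaSet X (Sum.inl w.1) := by
  ext (_ | a)
  · exact iff_of_false hσ.2.1 (none_notMem_deltaSet _)
  rw [mem_deltaSet_inl]
  refine ⟨fun ha => ?_, fun ha => hσ.mem_of_prefix hw ha⟩
  rcases hσ.prefix_total ha hw with haw | hwa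
  · exact haw
  · rw [hwa.eq_of_length_le (hlongest a ha)]

lemma langIsString.exists_eq_deltaSet_inr
    (hXcl : @IsClosed (ℕ → A) (@Pi.topologicalSpace ℕ (fun _ => A) (fun _ => ⊥)) X)
    (hXsh : ∀ x ∈ X, (fun n => x (n + 1)) ∈ X) {σ : Set (LangSG A (shiftLang X))}
    (hσ : langIsString (shiftLang X) σ) (hunbdd : ∀ n, ∃ v, some v ∈ σ ∧ n < v.1.length) :
    ∃ x ∈ X, σ = deltaSet X (Sum.inr x) := by
  choose f hfσ hflen using hunbdd
  set x : ℕ → A := fun i => (f i).1[i]'(hflen i)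
  have hseq : ∀ a, some a ∈ σ → a.1 = seqTake x a.1.length := fun a ha =>
    eq_seqTake_iff.2 fun i hi => by
      rcases hσ.prefix_total ha (hfσ i) with h | h
      · exact h.getElem hi
      · exact (h.getElem (hflen i)).symm
  have hfx : ∀ {m n}, m ≤ (f n).1.length → seqTake x m <+: (f n).1 := fun hmn =>
    hseq _ (hfσ _) ▸ seqTake_prefix_seqTake x hmn
  refine ⟨x, mem_of_forall_seqTake_mem_shiftLang hXcl hXsh fun n =>
    mem_shiftLang_of_infix (f n).2 ?_ (hfx (hflen n)).isInfix, ?_⟩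
  · simp [← List.length_pos_iff]
  ext (_ | p)
  · exact iff_of_false hσ.2.1 (none_notMem_deltaSet _)
  rw [mem_deltaSet_inr]
  refine ⟨hseq p, fun hp => hσ.mem_of_prefix (hfσ p.1.length) ?_⟩
  have hpf := hfx (n := p.1.length) (hflen _).le
  rwa [← hp] at hpf

lemma langIsString.exists_eq_deltaSet
    (hXcl : @IsClosed (ℕ → A) (@Pi.topologicalSpace ℕ (fun _ => A) (fun _ => ⊥)) X)
    (hXsh : ∀ x ∈ X, (fun n => x (n + 1)) ∈ X) {σ : Set (LangSG A (shiftLang X))}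
    (hσ : langIsString (shiftLang X) σ) : ∃ ω, Admissible X ω ∧ σ = deltaSet X ω := by
  set lengths := (fun v : {w // w ∈ shiftLang X} => v.1.length) '' {v | some v ∈ σ}
  by_cases hbdd : BddAbove lengths
  · have hne : lengths.Nonempty := by
      obtain ⟨s, hs⟩ := hσ.1
      obtain ⟨v, rfl⟩ := hσ.exists_eq_some hs
      exact ⟨_, v, hs, rfl⟩
    obtain ⟨w, hw, hwlen⟩ := Nat.sSup_mem hne hbdd
    refine ⟨Sum.inl w.1, w.2, hσ.eq_deltaSet_inl hw fun v hv => ?_⟩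
    simpa only [hwlen] using le_csSup hbdd ⟨v, hv, rfl⟩
  · obtain ⟨x, hx, rfl⟩ := hσ.exists_eq_deltaSet_inr hXcl hXsh fun n => by
      obtain ⟨_, ⟨v, hv, rfl⟩, hnv⟩ := not_bddAbove_iff.1 hbdd n
      exact ⟨v, hv, hnv⟩
    exact ⟨Sum.inr x, hx, rfl⟩

end Classification

theorem subshift_strings_general {A : Type*} (X : Set (ℕ → A))
    (hXcl : @IsClosed (ℕ → A) (@Pi.topologicalSpace ℕ (fun _ => A) (fun _ => ⊥)) X)
    (hXsh : ∀ x ∈ X, (fun n => x (n + 1)) ∈ X) :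
    (∀ ω : List A ⊕ (ℕ → A), Admissible X ω → langIsString (shiftLang X) (deltaSet X ω)) ∧
    (∀ ω : List A ⊕ (ℕ → A), Admissible X ω →
      ((deltaSet X ω = langInterior (shiftLang X) (deltaSet X ω)) ↔
        ∃ x : ℕ → A, ω = Sum.inr x)) ∧
    (∀ ω : List A ⊕ (ℕ → A), Admissible X ω →
      ((∀ μ : Set (LangSG A (shiftLang X)), langIsString (shiftLang X) μ →
          deltaSet X ω ⊆ μ → deltaSet X ω = μ) ↔
        ∃ x : ℕ → A, ω = Sum.inr x)) ∧
    (∀ σ : Set (LangSG A (shiftLang X)), langIsString (shiftLang X) σ →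
      ∃! ω : List A ⊕ (ℕ → A), Admissible X ω ∧ σ = deltaSet X ω) := by
  refine ⟨fun ω hω => deltaSet_isString hω, fun ω hω => deltaSet_eq_langInterior_iff hω,
    fun ω hω => deltaSet_maximal_iff hω, fun σ hσ => ?_⟩
  obtain ⟨ω, hω, rfl⟩ := hσ.exists_eq_deltaSet hXcl hXsh
  exact ⟨ω, ⟨hω, rfl⟩, fun ω' ⟨hω', h⟩ => deltaSet_injOn hω' hω h.symm⟩

/-- In the semigroup of a subshift: (i) `δ_ω` is a string for every admissible word `ω`;
(ii) `δ_ω` is open iff `ω` is infinite; (iii) `δ_ω` is maximal iff `ω` is infinite;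
(iv) every string is `δ_ω` for a unique admissible word `ω`. -/
theorem subshift_strings {A : Type*} [Fintype A] (X : Set (ℕ → A)) (hXne : X.Nonempty)
    (hXcl : @IsClosed (ℕ → A) (@Pi.topologicalSpace ℕ (fun _ => A) (fun _ => ⊥)) X)
    (hXsh : ∀ x ∈ X, (fun n => x (n + 1)) ∈ X) :
    (∀ ω : List A ⊕ (ℕ → A), Admissible X ω → langIsString (shiftLang X) (deltaSet X ω)) ∧
    (∀ ω : List A ⊕ (ℕ → A), Admissible X ω →
      ((deltaSet X ω = langInterior (shiftLang X) (deltaSet X ω)) ↔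
        ∃ x : ℕ → A, ω = Sum.inr x)) ∧
    (∀ ω : List A ⊕ (ℕ → A), Admissible X ω →
      ((∀ μ : Set (LangSG A (shiftLang X)), langIsString (shiftLang X) μ →
          deltaSet X ω ⊆ μ → deltaSet X ω = μ) ↔
        ∃ x : ℕ → A, ω = Sum.inr x)) ∧
    (∀ σ : Set (LangSG A (shiftLang X)), langIsString (shiftLang X) σ →
      ∃! ω : List A ⊕ (ℕ → A), Admissible X ω ∧ σ = deltaSet X ω) :=
  subshift_strings_general X hXcl hXsh

end ExSt
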